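/- Define for m ∈ ℕ₀ the real-valued Cauchy–Laguerre functions α_m(t) = (1/√2)(ψ_m(t) + conj(ψ_m(t))) and β_m(t) = (1/(i√2))(ψ_m(t) − conj(ψ_m(t))). Then for all t, u ∈ ℝ both series converge and ∑_{m=0}^∞ α_m(t) α_m(u) + ∑_{m=0}^∞ β_m(t) β_m(u) = 1/(1 + (t−u)²). -/

import Mathlib

open Real Complex

/-- The complex-valued Cauchy–Laguerre functions of nonnegative index:
`ψ_m(t) = −(1/√2)(it)^m/(it−1)^{m+1}` for `m ∈ ℕ₀`. -/
noncomputable def cauchyLagPos (m : ℕ) (t : ℝ) : ℂ :=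
  -(1 / (Real.sqrt 2 : ℂ)) * (Complex.I * t) ^ m / (Complex.I * t - 1) ^ (m + 1)

/-- The real-valued Cauchy–Laguerre function `α_m = (1/√2)(ψ_m + conj ψ_m)`. -/
noncomputable def cauchyAlpha (m : ℕ) (t : ℝ) : ℂ :=
  (1 / (Real.sqrt 2 : ℂ)) * (cauchyLagPos m t + (starRingEnd ℂ) (cauchyLagPos m t))

/-- The real-valued Cauchy–Laguerre function `β_m = (1/(i√2))(ψ_m − conj ψ_m)`. -/
noncomputable def cauchyBeta (m : ℕ) (t : ℝ) : ℂ :=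
  (1 / (Complex.I * (Real.sqrt 2 : ℂ))) * (cauchyLagPos m t - (starRingEnd ℂ) (cauchyLagPos m t))

/-!
Writing `X_m(t) = (it)^m/(it-1)^{m+1}` and `Y_m(t) = (it)^m/(it+1)^{m+1}`, one has
`ψ_m = -X_m/√2` and `conj ψ_m = Y_m/√2`, so `α_m = (Y_m - X_m)/2` and `β_m = i(Y_m + X_m)/2`.
Every product of such terms at `t` and `u` is a geometric series in `-tu/((it ± 1)(iu ± 1))`,
whose ratio has modulus `|tu|/√((1+t²)(1+u²)) < 1`. In `α_m(t)α_m(u) + β_m(t)β_m(u)` only the mixed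
products survive, and their sums `1/(-1 ± i(t-u))` add up to the Cauchy kernel.
-/

theorem hasSum_pow_div_pow_succ {𝕜 : Type*} [NormedField 𝕜] [CompleteSpace 𝕜] {z w : 𝕜}
    (h : ‖z‖ < ‖w‖) : HasSum (fun m : ℕ => z ^ m / w ^ (m + 1)) (w - z)⁻¹ := by
  have hw : w ≠ 0 := norm_pos_iff.mp ((norm_nonneg z).trans_lt h)
  have hzw : ‖z / w‖ < 1 := by rwa [norm_div, div_lt_one (norm_pos_iff.mpr hw)]
  have hsum : w⁻¹ * (1 - z / w)⁻¹ = (w - z)⁻¹ := by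
    rw [← mul_inv, mul_sub, mul_div_cancel₀ _ hw, mul_one]
  refine hsum ▸ ((hasSum_geometric_of_norm_lt_one hzw).mul_left w⁻¹).congr_fun fun m => ?_
  rw [div_pow, pow_succ]
  field_simp

noncomputable def cauchyLagTerm (c : ℝ) (m : ℕ) (t : ℝ) : ℂ :=
  (I * t) ^ m / (I * t + c) ^ (m + 1)

theorem norm_ofReal_lt_norm_I_mul_add {c : ℝ} (hc : c ≠ 0) (t : ℝ) :
    ‖(t : ℂ)‖ < ‖I * t + c‖ := by
  rw [← sq_lt_sq₀ (norm_nonneg _) (norm_nonneg _), Complex.sq_norm, Complex.sq_norm,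
    Complex.normSq_apply, Complex.normSq_apply]
  simp only [ofReal_re, ofReal_im, mul_zero, add_zero, add_re, mul_re, I_re, zero_mul, I_im,
    sub_self, zero_add, add_im, mul_im, one_mul, lt_add_iff_pos_left, mul_self_pos]
  exact hc

theorem cauchyLagTerm_mul (c d : ℝ) (m : ℕ) (t u : ℝ) :
    cauchyLagTerm c m t * cauchyLagTerm d m u =
      (-(t * u) : ℂ) ^ m / ((I * t + c) * (I * u + d)) ^ (m + 1) := by
  rw [cauchyLagTerm, cauchyLagTerm, div_mul_div_comm, ← mul_pow, ← mul_pow]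
  congr 2
  linear_combination (t * u : ℂ) * I_mul_I

theorem hasSum_cauchyLagTerm_mul {c d : ℝ} (hc : c ≠ 0) (hd : d ≠ 0) (t u : ℝ) :
    HasSum (fun m => cauchyLagTerm c m t * cauchyLagTerm d m u)
      ((I * t + c) * (I * u + d) + t * u)⁻¹ := by
  have h : ‖(-(t * u) : ℂ)‖ < ‖(I * t + c) * (I * u + d)‖ := by
    rw [norm_neg, norm_mul, norm_mul]
    exact mul_lt_mul'' (norm_ofReal_lt_norm_I_mul_add hc t) (norm_ofReal_lt_norm_I_mul_add hd u)
      (norm_nonneg _) (norm_nonneg _)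
  simpa only [cauchyLagTerm_mul, sub_neg_eq_add] using hasSum_pow_div_pow_succ h

theorem cauchyLagPos_eq (m : ℕ) (t : ℝ) :
    cauchyLagPos m t = -(1 / (Real.sqrt 2 : ℂ)) * cauchyLagTerm (-1) m t := by
  rw [cauchyLagPos, cauchyLagTerm, mul_div_assoc]
  push_cast
  ring

theorem conj_cauchyLagPos (m : ℕ) (t : ℝ) :
    starRingEnd ℂ (cauchyLagPos m t) = 1 / (Real.sqrt 2 : ℂ) * cauchyLagTerm 1 m t := by
  rw [cauchyLagPos, cauchyLagTerm]
  simp only [map_div₀, map_mul, map_pow, map_sub, map_neg, map_one, conj_I, conj_ofReal]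
  rw [show -I * t - 1 = -(I * t + ((1 : ℝ) : ℂ)) by push_cast; ring, neg_mul, neg_pow,
    neg_pow _ (m + 1), pow_succ (-1 : ℂ)]
  field_simp
  ring

theorem ofReal_sqrt_two_mul_self : (Real.sqrt 2 : ℂ) * (Real.sqrt 2 : ℂ) = 2 := by
  exact_mod_cast Real.mul_self_sqrt zero_le_two

theorem cauchyAlpha_eq (m : ℕ) (t : ℝ) :
    cauchyAlpha m t = (cauchyLagTerm 1 m t - cauchyLagTerm (-1) m t) / 2 := by
  have h := ofReal_sqrt_two_mul_self
  have hsqrt : (Real.sqrt 2 : ℂ) ≠ 0 := by exact_mod_cast (Real.sqrt_pos.mpr two_pos).ne'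
  rw [cauchyAlpha, conj_cauchyLagPos, cauchyLagPos_eq]
  field_simp
  linear_combination (cauchyLagTerm (-1) m t - cauchyLagTerm 1 m t) * h

theorem cauchyBeta_eq (m : ℕ) (t : ℝ) :
    cauchyBeta m t = I * (cauchyLagTerm 1 m t + cauchyLagTerm (-1) m t) / 2 := by
  have h := ofReal_sqrt_two_mul_self
  have hsqrt : (Real.sqrt 2 : ℂ) ≠ 0 := by exact_mod_cast (Real.sqrt_pos.mpr two_pos).ne'
  rw [cauchyBeta, conj_cauchyLagPos, cauchyLagPos_eq]
  field_simp
  linear_combination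
    (cauchyLagTerm 1 m t + cauchyLagTerm (-1) m t) * (h - (Real.sqrt 2 : ℂ) ^ 2 * I_mul_I)

theorem inv_one_sub_I_mul_add_inv_one_add_I_mul {x : ℂ} (hx : 1 + x ^ 2 ≠ 0) :
    (1 - I * x)⁻¹ + (1 + I * x)⁻¹ = 2 / (1 + x ^ 2) := by
  have hprod : (1 - I * x) * (1 + I * x) = 1 + x ^ 2 := by linear_combination -x ^ 2 * I_mul_I
  have hsub : 1 - I * x ≠ 0 := left_ne_zero_of_mul (hprod ▸ hx)
  have hadd : 1 + I * x ≠ 0 := right_ne_zero_of_mul (hprod ▸ hx)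
  rw [← hprod]
  field_simp
  ring

section

variable (t u : ℝ)

theorem summable_cauchyAlpha_mul :
    Summable fun m => cauchyAlpha m t * cauchyAlpha m u := by
  have h (c d : ℝ) (hc : c ≠ 0) (hd : d ≠ 0) := (hasSum_cauchyLagTerm_mul hc hd t u).summable
  have h1 : (1 : ℝ) ≠ 0 := one_ne_zero
  have hm1 : (-1 : ℝ) ≠ 0 := by norm_num
  refine ((((h 1 1 h1 h1).sub (h 1 (-1) h1 hm1)).sub
    ((h (-1) 1 hm1 h1).sub (h (-1) (-1) hm1 hm1))).div_const 4).congr fun m => ?_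
  rw [cauchyAlpha_eq, cauchyAlpha_eq]
  ring

theorem summable_cauchyBeta_mul : Summable fun m => cauchyBeta m t * cauchyBeta m u := by
  have h (c d : ℝ) (hc : c ≠ 0) (hd : d ≠ 0) := (hasSum_cauchyLagTerm_mul hc hd t u).summable
  have h1 : (1 : ℝ) ≠ 0 := one_ne_zero
  have hm1 : (-1 : ℝ) ≠ 0 := by norm_num
  refine ((((h 1 1 h1 h1).add (h 1 (-1) h1 hm1)).add
    ((h (-1) 1 hm1 h1).add (h (-1) (-1) hm1 hm1))).div_const (-4)).congr fun m => ?_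
  rw [cauchyBeta_eq, cauchyBeta_eq]
  linear_combination (-(cauchyLagTerm 1 m t + cauchyLagTerm (-1) m t) *
    (cauchyLagTerm 1 m u + cauchyLagTerm (-1) m u) / 4) * I_mul_I

theorem cauchyAlpha_mul_add_cauchyBeta_mul (m : ℕ) :
    cauchyAlpha m t * cauchyAlpha m u + cauchyBeta m t * cauchyBeta m u =
      -(cauchyLagTerm (-1) m t * cauchyLagTerm 1 m u +
        cauchyLagTerm 1 m t * cauchyLagTerm (-1) m u) / 2 := by
  rw [cauchyAlpha_eq, cauchyAlpha_eq, cauchyBeta_eq, cauchyBeta_eq]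
  linear_combination ((cauchyLagTerm 1 m t + cauchyLagTerm (-1) m t) *
    (cauchyLagTerm 1 m u + cauchyLagTerm (-1) m u) / 4) * I_mul_I

theorem hasSum_cauchyAlpha_mul_add_cauchyBeta_mul :
    HasSum (fun m => cauchyAlpha m t * cauchyAlpha m u + cauchyBeta m t * cauchyBeta m u)
      (1 / (1 + ((t : ℂ) - u) ^ 2)) := by
  have h1 : (1 : ℝ) ≠ 0 := one_ne_zero
  have hm1 : (-1 : ℝ) ≠ 0 := by norm_num
  have hXY := hasSum_cauchyLagTerm_mul hm1 h1 t u
  have hYX := hasSum_cauchyLagTerm_mul h1 hm1 t u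
  have hne : 1 + ((t : ℂ) - u) ^ 2 ≠ 0 := by
    exact_mod_cast (by positivity : (1 + (t - u) ^ 2 : ℝ) ≠ 0)
  have hdenXY : (I * t + ((-1 : ℝ) : ℂ)) * (I * u + ((1 : ℝ) : ℂ)) + t * u = -(1 - I * (t - u)) := by
    push_cast
    linear_combination (t * u : ℂ) * I_mul_I
  have hdenYX : (I * t + ((1 : ℝ) : ℂ)) * (I * u + ((-1 : ℝ) : ℂ)) + t * u = -(1 + I * (t - u)) := by
    push_cast
    linear_combination (t * u : ℂ) * I_mul_I
  rw [hdenXY, inv_neg] at hXY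
  rw [hdenYX, inv_neg] at hYX
  have hkernel :
      1 / (1 + ((t : ℂ) - u) ^ 2) = -(-(1 - I * (t - u))⁻¹ + -(1 + I * (t - u))⁻¹) / 2 := by
    rw [← neg_add, neg_neg, inv_one_sub_I_mul_add_inv_one_add_I_mul hne]
    ring
  exact hkernel ▸
    ((hXY.add hYX).neg.div_const 2).congr_fun (cauchyAlpha_mul_add_cauchyBeta_mul t u ·)

end

/-- The real Cauchy–Laguerre expansion of the Cauchy kernel. -/
theorem cauchy_real_expansion (t u : ℝ) :
    Summable (fun m : ℕ => cauchyAlpha m t * cauchyAlpha m u) ∧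
    Summable (fun m : ℕ => cauchyBeta m t * cauchyBeta m u) ∧
      (∑' m : ℕ, cauchyAlpha m t * cauchyAlpha m u) +
          (∑' m : ℕ, cauchyBeta m t * cauchyBeta m u) =
        1 / (1 + ((t : ℂ) - (u : ℂ)) ^ 2) := by
  have hα := summable_cauchyAlpha_mul t u
  have hβ := summable_cauchyBeta_mul t u
  refine ⟨hα, hβ, ?_⟩
  rw [← hα.tsum_add hβ]
  exact (hasSum_cauchyAlpha_mul_add_cauchyBeta_mul t u).tsum_eq
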